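/- arXiv:1212.3953 — 4 statements merged into one kernel-verified Lean document; each statement's English description precedes it below -/
import Mathlib

section
/- Let A be a p×p real matrix with at least one nonzero element in each row, and let L be the diagonal matrix with Lᵢᵢ = aᵢᵢ / Σⱼ aᵢⱼ². Then for every nonsingular diagonal matrix L', ‖LA − I_p‖² ≤ ‖L'A − I_p‖², and the minimum value equals p − Σᵢ (aᵢᵢ² / Σⱼ aᵢⱼ²). -/
open Matrix Finset

def permMat (p : ℕ) (σ : Equiv.Perm (Fin p)) : Matrix (Fin p) (Fin p) ℝ :=
  Matrix.of fun i j => if σ j = i then 1 else 0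

def PJDset (p : ℕ) : Set (Matrix (Fin p) (Fin p) ℝ) :=
  {C | ∃ (σ : Equiv.Perm (Fin p)) (J D : Fin p → ℝ),
    (∀ i, J i = 1 ∨ J i = -1) ∧ (∀ i, 0 < D i) ∧
    C = permMat p σ * Matrix.diagonal J * Matrix.diagonal D}

def frobSq {p : ℕ} (M : Matrix (Fin p) (Fin p) ℝ) : ℝ := ∑ i, ∑ j, (M i j) ^ 2

noncomputable def Dsq (p : ℕ) (A : Matrix (Fin p) (Fin p) ℝ) : ℝ :=
  (1 / ((p : ℝ) - 1)) * sInf ((fun C => frobSq (C * A - 1)) '' PJDset p)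

/-! Row `i` of `diagonal L * A - 1` contributes `L i ^ 2 * s i - 2 * L i * A i i + 1` to the squared
Frobenius norm, with `s i = ∑ j, A i j ^ 2`. The rows decouple, and each quadratic in `L i` is
minimised at `L i = A i i / s i`, with minimum value `1 - A i i ^ 2 / s i`. -/

lemma frobSq_diagonal_mul_sub_one {p : ℕ} (L : Fin p → ℝ) (A : Matrix (Fin p) (Fin p) ℝ) :
    frobSq (diagonal L * A - 1)
      = ∑ i, (L i ^ 2 * ∑ j, A i j ^ 2 - 2 * L i * A i i + 1) := by
  refine sum_congr rfl fun i _ => ?_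
  have entry (j : Fin p) : ((diagonal L * A - 1) i j) ^ 2
      = L i ^ 2 * A i j ^ 2 - (if i = j then 2 * L i * A i j - 1 else 0) := by
    by_cases hij : i = j <;> simp [hij, one_apply] <;> ring
  simp only [entry, sum_sub_distrib, ← mul_sum, sum_ite_eq, mem_univ, if_true]
  ring

lemma sq_div_mul_sub_two_mul_add_one {s : ℝ} (hs : s ≠ 0) (a : ℝ) :
    (a / s) ^ 2 * s - 2 * (a / s) * a + 1 = 1 - a ^ 2 / s := by
  field_simp
  ring

lemma one_sub_sq_div_le {s : ℝ} (hs : 0 < s) (a l : ℝ) :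
    1 - a ^ 2 / s ≤ l ^ 2 * s - 2 * l * a + 1 := by
  have gap : l ^ 2 * s - 2 * l * a + 1 - (1 - a ^ 2 / s) = s * (l - a / s) ^ 2 := by
    field_simp
    ring
  rw [← sub_nonneg, gap]
  positivity

theorem stmt4_general (p : ℕ) (A : Matrix (Fin p) (Fin p) ℝ)
    (h : ∀ i, 0 < ∑ j, (A i j) ^ 2) :
    (∀ L' : Fin p → ℝ, (∀ i, L' i ≠ 0) →
      frobSq (Matrix.diagonal (fun i => A i i / ∑ j, (A i j) ^ 2) * A - 1)
        ≤ frobSq (Matrix.diagonal L' * A - 1)) ∧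
    frobSq (Matrix.diagonal (fun i => A i i / ∑ j, (A i j) ^ 2) * A - 1)
      = (p : ℝ) - ∑ i, (A i i) ^ 2 / ∑ j, (A i j) ^ 2 := by
  have row_min (i : Fin p) :
      (A i i / ∑ j, A i j ^ 2) ^ 2 * (∑ j, A i j ^ 2) - 2 * (A i i / ∑ j, A i j ^ 2) * A i i + 1
        = 1 - A i i ^ 2 / ∑ j, A i j ^ 2 :=
    sq_div_mul_sub_two_mul_add_one (h i).ne' _
  simp only [frobSq_diagonal_mul_sub_one, row_min]
  refine ⟨fun L' _ => sum_le_sum fun i _ => one_sub_sq_div_le (h i) _ _, ?_⟩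
  simp [sum_sub_distrib]

theorem stmt4 (p : ℕ) (hp : 1 ≤ p) (A : Matrix (Fin p) (Fin p) ℝ)
    (h : ∀ i, 0 < ∑ j, (A i j) ^ 2) :
    (∀ L' : Fin p → ℝ, (∀ i, L' i ≠ 0) →
      frobSq (Matrix.diagonal (fun i => A i i / ∑ j, (A i j) ^ 2) * A - 1)
        ≤ frobSq (Matrix.diagonal L' * A - 1)) ∧
    frobSq (Matrix.diagonal (fun i => A i i / ∑ j, (A i j) ^ 2) * A - 1)
      = (p : ℝ) - ∑ i, (A i i) ^ 2 / ∑ j, (A i j) ^ 2 :=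
  stmt4_general p A h
end

section
/- Let à be a p×p row-stochastic matrix (nonnegative entries, row sums equal 1). If tr(P Ã) is equal for all permutation matrices P (equivalently, if max_P tr(PÃ) = 1), then all rows of à are identical. -/
open Matrix Finset

/-!
The trace of `P Ã` is the sum of the entries of `Ã` along a transversal, so all these sums
agree. Composing a transversal with the transposition of two columns `j, j'` shows
`ã a j + ã b j' = ã a j' + ã b j` whenever `j, j'` and `a, b` are matched by some
permutation; hence `ã a j - ã b j` does not depend on `j`, and summing over `j` with equal
row sums forces it to vanish.
-/

theorem trace_permMat_mul {p : ℕ} (σ : Equiv.Perm (Fin p)) (A : Matrix (Fin p) (Fin p) ℝ) :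
    trace (permMat p σ * A) = ∑ i, A (σ⁻¹ i) i := by
  simp [trace, mul_apply, permMat, ite_mul, ← Equiv.Perm.eq_inv_iff_eq]

section

variable {n R : Type*} [Fintype n] [AddCommGroup R]

theorem row_eq_of_add_eq_add [IsAddTorsionFree R] {A : Matrix n n R} {a b : n}
    (hA : ∀ j j', A a j + A b j' = A a j' + A b j) (hsum : ∑ j, A a j = ∑ j, A b j) (j : n) :
    A a j = A b j := by
  have : Nonempty n := ⟨j⟩
  have hconst : Fintype.card n • (A a j - A b j) = 0 := calc
    Fintype.card n • (A a j - A b j) = ∑ j', (A a j' - A b j') := by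
      rw [← card_univ, ← sum_const]
      exact Fintype.sum_congr _ _ fun j' => sub_eq_sub_iff_add_eq_add.mpr (hA j j')
    _ = 0 := by rw [sum_sub_distrib, hsum, sub_self]
  exact sub_eq_zero.mp ((nsmul_eq_zero_iff.mp hconst).resolve_right Fintype.card_ne_zero)

variable [DecidableEq n]

theorem sum_swap_apply_sub_sum (f : n → n → R) {j j' : n} (h : j ≠ j') :
    ∑ i, f (Equiv.swap j j' i) i - ∑ i, f i i = f j' j + f j j' - (f j j + f j' j') := by
  rw [← sum_sub_distrib, ← sum_subset (subset_univ {j, j'}), sum_pair h,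
    Equiv.swap_apply_left, Equiv.swap_apply_right]
  · abel
  · intro i _ hi
    simp only [mem_insert, mem_singleton, not_or] at hi
    rw [Equiv.swap_apply_of_ne_of_ne hi.1 hi.2, sub_self]

theorem add_eq_add_of_sum_perm_diag_const (A : Matrix n n R) {c : R}
    (h : ∀ σ : Equiv.Perm n, ∑ i, A (σ i) i = c) (a b j j' : n) :
    A a j + A b j' = A a j' + A b j := by
  rcases eq_or_ne j j' with rfl | hj
  · rfl
  rcases eq_or_ne a b with rfl | hab
  · exact add_comm _ _
  obtain ⟨σ, hσj, hσj'⟩ : ∃ σ : Equiv.Perm n, σ j = a ∧ σ j' = b :=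
    MulAction.is_two_pretransitive_iff.mp (Equiv.Perm.isMultiplyPretransitive n 2) hj hab
  have hswap : ∑ i, A (σ (Equiv.swap j j' i)) i = c := h (σ * Equiv.swap j j')
  have hdiff := sum_swap_apply_sub_sum (fun k i => A (σ k) i) hj
  rw [hswap, h σ, sub_self, hσj, hσj'] at hdiff
  rw [eq_comm, ← sub_eq_zero, hdiff]
  abel

end

theorem stmt8_general (p : ℕ) (At : Matrix (Fin p) (Fin p) ℝ)
    (hrow : ∀ i, ∑ j, At i j = 1)
    (heq : ∀ σ τ : Equiv.Perm (Fin p),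
      Matrix.trace (permMat p σ * At) = Matrix.trace (permMat p τ * At)) :
    ∀ i i' j, At i j = At i' j := by
  have hdiag (σ : Equiv.Perm (Fin p)) : ∑ i, At (σ i) i = ∑ i, At i i := by
    simpa [trace_permMat_mul] using heq σ⁻¹ 1
  intro i i' j
  exact row_eq_of_add_eq_add (add_eq_add_of_sum_perm_diag_const At hdiag i i')
    (by rw [hrow, hrow]) j

theorem stmt8 (p : ℕ) (hp : 2 ≤ p) (At : Matrix (Fin p) (Fin p) ℝ)
    (hpos : ∀ i j, 0 ≤ At i j) (hrow : ∀ i, ∑ j, At i j = 1)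
    (heq : ∀ σ τ : Equiv.Perm (Fin p),
      Matrix.trace (permMat p σ * At) = Matrix.trace (permMat p τ * At)) :
    ∀ i i' j, At i j = At i' j :=
  stmt8_general p At hrow heq
end

section
/- For every p×p real matrix A having at least one nonzero element in each row, the minimum distance index satisfies 0 ≤ D²(A) ≤ 1, where D²(A) = (1/(p−1)) inf_{C∈C} ‖CA − I_p‖². -/
open Matrix Finset

/-!
Write `C = Pσ · diag c` with `σ` a permutation and `c` a nowhere-zero vector; these are exactly
the matrices of `PJDset`. Row `r` of `C A - I` then contributes
`c_r² S_r - 2 c_r a_{r,σ r} + 1` with `S_r = Σ_j a_{rj}²`, which at `c_r = a_{r,σ r} / S_r` equals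
`1 - Ã_{r,σ r}`. Hence the infimum is at most `p - Σ_r Ã_{r,σ r}` for every `σ` (in the limit,
since `c_r` must not vanish). As `Ã` is row-stochastic, the average of `Σ_r Ã_{r,σ r}` over all
permutations is `1`, so some `σ` gives an infimum at most `p - 1`.
-/

open Filter Topology

section Permutations

variable {α M : Type*} [Fintype α] [DecidableEq α] [AddCommMonoid M]

theorem card_nsmul_sum_perm_apply (g : α → M) (a : α) :
    Fintype.card α • ∑ σ : Equiv.Perm α, g (σ a) = (Fintype.card α).factorial • ∑ b, g b := by
  have h_indep : ∀ b, ∑ σ : Equiv.Perm α, g (σ b) = ∑ σ : Equiv.Perm α, g (σ a) := fun b =>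
    Fintype.sum_equiv (Equiv.mulRight (Equiv.swap a b)) _ _ fun σ => by simp
  calc Fintype.card α • ∑ σ : Equiv.Perm α, g (σ a)
      = ∑ b, ∑ σ : Equiv.Perm α, g (σ b) := by simp [h_indep]
    _ = ∑ σ : Equiv.Perm α, ∑ b, g (σ b) := Finset.sum_comm
    _ = ∑ σ : Equiv.Perm α, ∑ b, g b := by simp only [Equiv.sum_comp]
    _ = (Fintype.card α).factorial • ∑ b, g b := by simp [Fintype.card_perm]

theorem exists_perm_sum_le_card_nsmul [LinearOrder M] [IsOrderedCancelAddMonoid M]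
    (f : α → α → M) : ∃ σ : Equiv.Perm α, ∑ i, ∑ j, f i j ≤ Fintype.card α • ∑ i, f i (σ i) := by
  have h_avg : ∑ _σ : Equiv.Perm α, ∑ i, ∑ j, f i j
      = ∑ σ : Equiv.Perm α, Fintype.card α • ∑ i, f i (σ i) := by
    calc ∑ _σ : Equiv.Perm α, ∑ i, ∑ j, f i j
        = ∑ i, (Fintype.card α).factorial • ∑ j, f i j := by
          simp [Finset.sum_const, Fintype.card_perm, Finset.smul_sum]
      _ = ∑ i, Fintype.card α • ∑ σ : Equiv.Perm α, f i (σ i) := by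
          simp only [card_nsmul_sum_perm_apply]
      _ = ∑ σ : Equiv.Perm α, Fintype.card α • ∑ i, f i (σ i) := by
          simp only [← Finset.smul_sum]; rw [Finset.sum_comm]
  obtain ⟨σ, -, hσ⟩ := Finset.exists_le_of_sum_le Finset.univ_nonempty h_avg.le
  exact ⟨σ, hσ⟩

end Permutations

section Matrices

variable {p : ℕ}

lemma frobSq_nonneg (M : Matrix (Fin p) (Fin p) ℝ) : 0 ≤ frobSq M :=
  sum_nonneg fun _ _ => sum_nonneg fun _ _ => sq_nonneg _

lemma permMat_mul_apply (σ : Equiv.Perm (Fin p)) (M : Matrix (Fin p) (Fin p) ℝ) (i j : Fin p) :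
    (permMat p σ * M) i j = M (σ.symm i) j := by
  simp [permMat, Matrix.mul_apply, ← Equiv.eq_symm_apply]

lemma permMat_mul_diagonal_mem_PJDset (σ : Equiv.Perm (Fin p)) {c : Fin p → ℝ}
    (hc : ∀ i, c i ≠ 0) : permMat p σ * diagonal c ∈ PJDset p := by
  refine ⟨σ, fun i => if c i < 0 then -1 else 1, fun i => |c i|,
    fun i => by dsimp only; split_ifs <;> simp, fun i => abs_pos.mpr (hc i), ?_⟩
  rw [Matrix.mul_assoc, diagonal_mul_diagonal]
  congr 2
  funext i
  split_ifs with h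
  · simp [abs_of_neg h]
  · simp [abs_of_nonneg (not_lt.mp h)]

lemma sum_sq_mul_sub_ite {ι : Type*} [Fintype ι] [DecidableEq ι] (c : ℝ) (v : ι → ℝ) (k : ι) :
    ∑ j, (c * v j - if k = j then 1 else 0) ^ 2 = c ^ 2 * ∑ j, v j ^ 2 - 2 * c * v k + 1 := by
  have h_expand : ∀ j, (c * v j - if k = j then 1 else 0) ^ 2
      = c ^ 2 * v j ^ 2 - 2 * c * (if k = j then v j else 0) + (if k = j then 1 else 0) := by
    intro j
    split_ifs <;> ring
  simp only [h_expand, sum_add_distrib, sum_sub_distrib, ← mul_sum, sum_ite_eq, mem_univ,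
    if_true]

lemma frobSq_permMat_mul_diagonal_mul_sub_one (σ : Equiv.Perm (Fin p)) (c : Fin p → ℝ)
    (A : Matrix (Fin p) (Fin p) ℝ) :
    frobSq (permMat p σ * diagonal c * A - 1)
      = ∑ r, (c r ^ 2 * ∑ j, A r j ^ 2 - 2 * c r * A r (σ r) + 1) := by
  unfold frobSq
  rw [← Equiv.sum_comp σ]
  refine sum_congr rfl fun r _ => ?_
  rw [← sum_sq_mul_sub_ite]
  refine sum_congr rfl fun j _ => ?_
  rw [Matrix.sub_apply, Matrix.mul_assoc, permMat_mul_apply, diagonal_mul, one_apply]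
  simp

end Matrices

/-- The paper's `Ã`. -/
noncomputable def sqRowNormalized {m n : Type*} [Fintype n] (A : Matrix m n ℝ) : Matrix m n ℝ :=
  Matrix.of fun i j => A i j ^ 2 / ∑ k, A i k ^ 2

section RowNormalized

variable {m n : Type*} [Fintype n] {A : Matrix m n ℝ}

lemma sum_sq_row_pos (hA : ∀ i, ∃ j, A i j ≠ 0) (i : m) : 0 < ∑ j, A i j ^ 2 := by
  obtain ⟨j, hj⟩ := hA i
  exact sum_pos' (fun k _ => sq_nonneg _) ⟨j, mem_univ j, by positivity⟩

lemma sum_sqRowNormalized_apply (hA : ∀ i, ∃ j, A i j ≠ 0) (i : m) :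
    ∑ j, sqRowNormalized A i j = 1 := by
  simp only [sqRowNormalized, of_apply, ← sum_div]
  exact div_self (sum_sq_row_pos hA i).ne'

end RowNormalized

lemma exists_perm_one_le_sum_sqRowNormalized {p : ℕ} [NeZero p] {A : Matrix (Fin p) (Fin p) ℝ}
    (hA : ∀ i, ∃ j, A i j ≠ 0) : ∃ σ : Equiv.Perm (Fin p), 1 ≤ ∑ r, sqRowNormalized A r (σ r) := by
  obtain ⟨σ, hσ⟩ := exists_perm_sum_le_card_nsmul (sqRowNormalized A)
  refine ⟨σ, le_of_mul_le_mul_left ?_ (Nat.cast_pos.mpr (NeZero.pos p))⟩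
  simpa [sum_sqRowNormalized_apply hA, nsmul_eq_mul] using hσ

/-- The unconstrained optimal row scaling `a / S` is inadmissible when `a = 0`; any nonzero `δ`
then comes within `δ² S` of it. -/
lemma exists_ne_zero_quadratic_le {a S : ℝ} (hS : 0 < S) {δ : ℝ} (hδ : δ ≠ 0) :
    ∃ c ≠ 0, c ^ 2 * S - 2 * c * a + 1 ≤ 1 - a ^ 2 / S + δ ^ 2 * S := by
  by_cases ha : a = 0
  · exact ⟨δ, hδ, by simp [ha, add_comm]⟩
  · refine ⟨a / S, div_ne_zero ha hS.ne', ?_⟩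
    have h_opt : (a / S) ^ 2 * S - 2 * (a / S) * a + 1 = 1 - a ^ 2 / S := by
      field_simp
      ring
    nlinarith [sq_nonneg δ]

section Bound

variable {p : ℕ} {A : Matrix (Fin p) (Fin p) ℝ}

lemma bddBelow_image_frobSq : BddBelow ((fun C => frobSq (C * A - 1)) '' PJDset p) :=
  ⟨0, Set.forall_mem_image.2 fun _ _ => frobSq_nonneg _⟩

lemma sInf_image_frobSq_le_of_ne_zero (hA : ∀ i, ∃ j, A i j ≠ 0) (σ : Equiv.Perm (Fin p))
    {δ : ℝ} (hδ : δ ≠ 0) :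
    sInf ((fun C => frobSq (C * A - 1)) '' PJDset p)
      ≤ p - ∑ r, sqRowNormalized A r (σ r) + δ ^ 2 * ∑ r, ∑ j, A r j ^ 2 := by
  choose c hc0 hc using fun r => exists_ne_zero_quadratic_le (a := A r (σ r))
    (sum_sq_row_pos hA r) hδ
  calc sInf ((fun C => frobSq (C * A - 1)) '' PJDset p)
      ≤ frobSq (permMat p σ * diagonal c * A - 1) :=
        csInf_le bddBelow_image_frobSq ⟨_, permMat_mul_diagonal_mem_PJDset σ hc0, rfl⟩
    _ = ∑ r, (c r ^ 2 * ∑ j, A r j ^ 2 - 2 * c r * A r (σ r) + 1) :=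
        frobSq_permMat_mul_diagonal_mul_sub_one σ c A
    _ ≤ ∑ r, (1 - A r (σ r) ^ 2 / ∑ j, A r j ^ 2 + δ ^ 2 * ∑ j, A r j ^ 2) :=
        sum_le_sum fun r _ => hc r
    _ = p - ∑ r, sqRowNormalized A r (σ r) + δ ^ 2 * ∑ r, ∑ j, A r j ^ 2 := by
        simp [sum_add_distrib, sum_sub_distrib, mul_sum, sqRowNormalized]

lemma sInf_image_frobSq_le (hA : ∀ i, ∃ j, A i j ≠ 0) (σ : Equiv.Perm (Fin p)) :
    sInf ((fun C => frobSq (C * A - 1)) '' PJDset p) ≤ p - ∑ r, sqRowNormalized A r (σ r) := by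
  have h_lim : Tendsto (fun δ : ℝ => p - ∑ r, sqRowNormalized A r (σ r)
      + δ ^ 2 * ∑ r, ∑ j, A r j ^ 2) (𝓝[≠] 0) (𝓝 (p - ∑ r, sqRowNormalized A r (σ r))) := by
    have h_cont : Continuous fun δ : ℝ => p - ∑ r, sqRowNormalized A r (σ r)
        + δ ^ 2 * ∑ r, ∑ j, A r j ^ 2 := by fun_prop
    simpa using (h_cont.tendsto 0).mono_left nhdsWithin_le_nhds
  exact ge_of_tendsto h_lim (eventually_nhdsWithin_of_forall fun _ hδ =>
    sInf_image_frobSq_le_of_ne_zero hA σ hδ)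

end Bound

theorem stmt9 (p : ℕ) (hp : 2 ≤ p) (A : Matrix (Fin p) (Fin p) ℝ)
    (h : ∀ i, ∃ j, A i j ≠ 0) :
    0 ≤ Dsq p A ∧ Dsq p A ≤ 1 := by
  have : NeZero p := ⟨by omega⟩
  have hp1 : (0 : ℝ) < p - 1 := by
    have : (2 : ℝ) ≤ p := by exact_mod_cast hp
    linarith
  have h_nonneg : 0 ≤ sInf ((fun C => frobSq (C * A - 1)) '' PJDset p) :=
    Real.sInf_nonneg (Set.forall_mem_image.2 fun _ _ => frobSq_nonneg _)
  obtain ⟨σ, hσ⟩ := exists_perm_one_le_sum_sqRowNormalized h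
  have h_le := sInf_image_frobSq_le h σ
  rw [Dsq, one_div_mul_eq_div]
  exact ⟨div_nonneg h_nonneg hp1.le, (div_le_one hp1).2 (by linarith)⟩
end

section
/- For any p×p real matrix G, the 'fully invariant' index inf over C₁, C₂ ∈ C of ‖C₁ G C₂⁻¹ − I_p‖ is degenerate in the bivariate case: for p = 2, any lower-triangular matrix G with nonzero diagonal entries g₁₁ ≠ 0, g₂₂ ≠ 0 satisfies inf_{C₁,C₂∈C} ‖C₁GC₂⁻¹ − I₂‖ = 0. -/
/-!
Rescaling by positive diagonal matrices (which lie in `PJDset`) gives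
`diag((t g₁₁)⁻¹, 1) · G · diag(t⁻¹, g₂₂)⁻¹ = [[1, 0], [t g₂₁, 1]]`, at distance `|t g₂₁|` from `I₂`.
Letting `t → 0` drives the distance to `0`; the infimum is not attained when `g₂₁ ≠ 0`.
-/

open Matrix Finset

open Filter Topology

def invariantDistances (p : ℕ) (A : Matrix (Fin p) (Fin p) ℝ) : Set ℝ :=
  {x | ∃ C₁ ∈ PJDset p, ∃ C₂ ∈ PJDset p, x = √(frobSq (C₁ * A * C₂⁻¹ - 1))}

lemma permMat_one (p : ℕ) : permMat p 1 = 1 := by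
  ext i j
  simp [permMat, Matrix.one_apply, eq_comm]

lemma diagonal_mem_PJDset {p : ℕ} {v : Fin p → ℝ} (hv : ∀ i, v i ≠ 0) :
    diagonal v ∈ PJDset p := by
  refine ⟨1, fun i => SignType.sign (v i), fun i => |v i|, fun i => ?_,
    fun i => abs_pos.mpr (hv i), ?_⟩
  · rcases (hv i).lt_or_gt with h | h <;> simp [h]
  · simp only [permMat_one, one_mul, diagonal_mul_diagonal, sign_mul_abs]

lemma nonneg_of_mem_invariantDistances {p : ℕ} {A : Matrix (Fin p) (Fin p) ℝ} {x : ℝ}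
    (hx : x ∈ invariantDistances p A) : 0 ≤ x := by
  obtain ⟨C₁, -, C₂, -, rfl⟩ := hx
  exact Real.sqrt_nonneg _

lemma abs_mul_mem_invariantDistances {g11 g21 g22 t : ℝ} (h11 : g11 ≠ 0) (h22 : g22 ≠ 0)
    (ht : t ≠ 0) : |t * g21| ∈ invariantDistances 2 !![g11, 0; g21, g22] := by
  have hC₁ : diagonal ![(t * g11)⁻¹, 1] ∈ PJDset 2 :=
    diagonal_mem_PJDset (by simp [Fin.forall_fin_two, ht, h11])
  have hC₂ : diagonal ![t⁻¹, g22] ∈ PJDset 2 :=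
    diagonal_mem_PJDset (by simp [Fin.forall_fin_two, ht, h22])
  have hinv : (diagonal ![t⁻¹, g22])⁻¹ = diagonal ![t, g22⁻¹] := by
    apply inv_eq_right_inv
    rw [diagonal_mul_diagonal, ← diagonal_one]
    congr 1
    ext i
    fin_cases i <;> simp [ht, h22]
  have hscaled : diagonal ![(t * g11)⁻¹, 1] * !![g11, 0; g21, g22] * diagonal ![t, g22⁻¹]
      = !![1, 0; t * g21, 1] := by
    ext i j
    fin_cases i <;> fin_cases j <;> simp [h22, mul_comm g21]
    field_simp
  refine ⟨_, hC₁, _, hC₂, ?_⟩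
  rw [hinv, hscaled, one_fin_two]
  simp [frobSq, Fin.sum_univ_two, Real.sqrt_sq_eq_abs]

theorem stmt18 (g11 g21 g22 : ℝ) (h11 : g11 ≠ 0) (h22 : g22 ≠ 0) :
    sInf {x : ℝ | ∃ C₁ ∈ PJDset 2, ∃ C₂ ∈ PJDset 2,
      x = Real.sqrt (frobSq (C₁ * !![g11, 0; g21, g22] * C₂⁻¹ - 1))} = 0 := by
  change sInf (invariantDistances 2 !![g11, 0; g21, g22]) = 0
  have hmem : ∀ t ≠ 0, |t * g21| ∈ invariantDistances 2 !![g11, 0; g21, g22] :=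
    fun t ht => abs_mul_mem_invariantDistances h11 h22 ht
  have hbdd : BddBelow (invariantDistances 2 !![g11, 0; g21, g22]) :=
    ⟨0, fun _ => nonneg_of_mem_invariantDistances⟩
  refine le_antisymm ?_ <|
    le_csInf ⟨_, hmem 1 one_ne_zero⟩ fun _ => nonneg_of_mem_invariantDistances
  have hlim : Tendsto (fun t : ℝ => |t * g21|) (𝓝[≠] 0) (𝓝 0) :=
    tendsto_nhdsWithin_of_tendsto_nhds <|
      (by fun_prop : Continuous fun t : ℝ => |t * g21|).tendsto' 0 0 (by simp)
  exact ge_of_tendsto hlim (eventually_nhdsWithin_of_forall fun t ht => csInf_le hbdd (hmem t ht))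
end
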